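/- Let T be a tree with at least one edge and edge set E. For x ∈ ℤ^E and α ∈ ℤ, one has (x, α) ∈ int(M_T) if and only if 1 ≤ x_e ≤ α − 1 for every e ∈ E. -/

import Mathlib

/-! Basic definitions for cut monoids of finite simple graphs. -/

open Classical in
/-- The cut vector of a vertex set `A`, as a function on `Sym2 V`:
value `1` on pairs with exactly one element in `A`, and `0` otherwise. -/
noncomputable def cutVec {V : Type} (A : Set V) : Sym2 V → ℤ :=
  Sym2.lift ⟨fun v w => if ((v ∈ A) ↔ (w ∈ A)) then 0 else 1,
    fun v w => if_congr iff_comm rfl rfl⟩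

variable {V : Type}

/-- The generators `(δ_A, 1)` of the cut monoid of `G`. -/
def cutGens (G : SimpleGraph V) : Set ((G.edgeSet → ℤ) × ℤ) :=
  {p | ∃ A : Set V, p = (fun e => cutVec A e.1, 1)}

/-- The cut monoid `M_G` of a graph `G`. -/
def cutMonoid (G : SimpleGraph V) : AddSubmonoid ((G.edgeSet → ℤ) × ℤ) :=
  AddSubmonoid.closure (cutGens G)

/-- The group `gp(M_G)` generated by the cut monoid. -/
def cutGroup (G : SimpleGraph V) : AddSubgroup ((G.edgeSet → ℤ) × ℤ) :=
  AddSubgroup.closure (cutGens G)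

/-- `M_G` is normal: every `x ∈ gp(M_G)` with `n • x ∈ M_G` for some `n ≥ 1` lies in `M_G`. -/
def CutNormal (G : SimpleGraph V) : Prop :=
  ∀ x ∈ cutGroup G, (∃ n : ℕ, 1 ≤ n ∧ n • x ∈ cutMonoid G) → x ∈ cutMonoid G

/-- `M_G` is seminormal: every `x ∈ gp(M_G)` with `2 • x ∈ M_G` and `3 • x ∈ M_G`
lies in `M_G`. -/
def CutSeminormal (G : SimpleGraph V) : Prop :=
  ∀ x ∈ cutGroup G, 2 • x ∈ cutMonoid G → 3 • x ∈ cutMonoid G → x ∈ cutMonoid G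

/-- Generators of the cone of `M_G`: nonnegative real multiples of the `(δ_A, 1)`. -/
noncomputable def cutConeGens (G : SimpleGraph V) : Set ((G.edgeSet → ℝ) × ℝ) :=
  {q | ∃ (c : ℝ) (A : Set V), 0 ≤ c ∧
    q = c • ((fun e => ((cutVec A e.1 : ℤ) : ℝ), (1 : ℝ)))}

/-- The cone `cone(M_G)`: all finite nonnegative real combinations of the `(δ_A, 1)`. -/
noncomputable def cutCone (G : SimpleGraph V) : Set ((G.edgeSet → ℝ) × ℝ) :=
  (AddSubmonoid.closure (cutConeGens G) : Set ((G.edgeSet → ℝ) × ℝ))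

/-- The canonical map from `ℤ^E × ℤ` to `ℝ^E × ℝ`. -/
noncomputable def toRealCut (G : SimpleGraph V) (p : (G.edgeSet → ℤ) × ℤ) :
    (G.edgeSet → ℝ) × ℝ :=
  (fun e => ((p.1 e : ℤ) : ℝ), ((p.2 : ℤ) : ℝ))

/-- `int(M_G)`: elements of `M_G` mapping into the topological interior of `cone(M_G)`. -/
noncomputable def cutInterior (G : SimpleGraph V) : Set ((G.edgeSet → ℤ) × ℤ) :=
  {p | p ∈ cutMonoid G ∧ toRealCut G p ∈ interior (cutCone G)}

/-- The set of last coordinates `α ∈ ℕ` realized by elements of `int(M_G)`;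
its least element is `m(G)`. -/
noncomputable def cutDegrees (G : SimpleGraph V) : Set ℕ :=
  {α | ∃ x : G.edgeSet → ℤ, ((x, (α : ℤ)) : (G.edgeSet → ℤ) × ℤ) ∈ cutInterior G}

/-- `H` is a minor of `G`: branch sets `B u` are nonempty, pairwise disjoint,
induce connected subgraphs, and edges of `H` are witnessed by edges of `G`. -/
def GraphMinor {W V : Type} (H : SimpleGraph W) (G : SimpleGraph V) : Prop :=
  ∃ B : W → Set V,
    (∀ u, (B u).Nonempty) ∧
    (∀ u v, u ≠ v → Disjoint (B u) (B v)) ∧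
    (∀ u, (G.induce (B u)).Connected) ∧
    (∀ u v, H.Adj u v → ∃ a ∈ B u, ∃ b ∈ B v, G.Adj a b)

/-- `G` is `K₅`-minor-free. -/
def K5Free (G : SimpleGraph V) : Prop :=
  ¬ GraphMinor (⊤ : SimpleGraph (Fin 5)) G

/-- `G` is bipartite: vertices split into two parts so every edge joins the parts. -/
def BipartiteG (G : SimpleGraph V) : Prop :=
  ∃ s : Set V, ∀ ⦃v w⦄, G.Adj v w → ((v ∈ s ∧ w ∉ s) ∨ (w ∈ s ∧ v ∉ s))

/-- `G` has an induced cycle of length `n` (n ≥ 3): an induced-subgraph copy of the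
cycle graph of length `n`. -/
def HasInducedCycleLen (G : SimpleGraph V) (n : ℕ) : Prop :=
  3 ≤ n ∧ Nonempty (SimpleGraph.cycleGraph n ↪g G)

/-- `G` contains a triangle. -/
def HasTriangle (G : SimpleGraph V) : Prop :=
  ∃ a b c, G.Adj a b ∧ G.Adj b c ∧ G.Adj a c

/-- `G` is chordal: every induced cycle is a triangle. -/
def ChordalG (G : SimpleGraph V) : Prop :=
  ∀ n, HasInducedCycleLen G n → n = 3

/-- `G` is bridgeless: every edge lies on some cycle. -/
def BridgelessG (G : SimpleGraph V) : Prop :=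
  ∀ e ∈ G.edgeSet, ∃ (v : V) (c : G.Walk v v), c.IsCycle ∧ e ∈ c.edges

/-- `G` is (isomorphic to) a cycle of length `n`. -/
def IsCycleOfLen (G : SimpleGraph V) (n : ℕ) : Prop :=
  3 ≤ n ∧ Nonempty (G ≃g SimpleGraph.cycleGraph n)

/-- `G` is a cycle. -/
def IsCycleGraph (G : SimpleGraph V) : Prop :=
  ∃ n, IsCycleOfLen G n

/-- `G` is a `0`-sum of `G1` and `G2`: copies of `G1`, `G2` cover `G`,
overlap in exactly one vertex, and every edge comes from `G1` or `G2`. -/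
def IsZeroSumDecomp {V1 V2 : Type} (G : SimpleGraph V) (G1 : SimpleGraph V1)
    (G2 : SimpleGraph V2) : Prop :=
  ∃ (f1 : V1 ↪ V) (f2 : V2 ↪ V),
    Set.range f1 ∪ Set.range f2 = Set.univ ∧
    (∃ v, Set.range f1 ∩ Set.range f2 = {v}) ∧
    (∀ a b, G.Adj a b ↔
      ((∃ x y, f1 x = a ∧ f1 y = b ∧ G1.Adj x y) ∨
       (∃ x y, f2 x = a ∧ f2 y = b ∧ G2.Adj x y)))

/-- `G` is a `1`-sum of `G1` and `G2` along a common edge. -/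
def IsOneSumDecomp {V1 V2 : Type} (G : SimpleGraph V) (G1 : SimpleGraph V1)
    (G2 : SimpleGraph V2) : Prop :=
  ∃ (f1 : V1 ↪ V) (f2 : V2 ↪ V) (v w : V),
    v ≠ w ∧
    Set.range f1 ∪ Set.range f2 = Set.univ ∧
    Set.range f1 ∩ Set.range f2 = {v, w} ∧
    (∃ x y, f1 x = v ∧ f1 y = w ∧ G1.Adj x y) ∧
    (∃ x y, f2 x = v ∧ f2 y = w ∧ G2.Adj x y) ∧
    (∀ a b, G.Adj a b ↔
      ((∃ x y, f1 x = a ∧ f1 y = b ∧ G1.Adj x y) ∨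
       (∃ x y, f2 x = a ∧ f2 y = b ∧ G2.Adj x y)))

/-- Ring graphs: obtained, up to adding isolated vertices, from finitely many
(finite) trees and cycles by iterated `0`-sums and `1`-sums. -/
inductive IsRingGraph : {V : Type} → SimpleGraph V → Prop
  | tree {V : Type} (G : SimpleGraph V) :
      Finite V → G.Connected → G.IsAcyclic → IsRingGraph G
  | cycle {V : Type} (G : SimpleGraph V) : IsCycleGraph G → IsRingGraph G
  | zeroSum {V1 V2 V : Type} {G1 : SimpleGraph V1} {G2 : SimpleGraph V2}
      {G : SimpleGraph V} :
      IsRingGraph G1 → IsRingGraph G2 → IsZeroSumDecomp G G1 G2 → IsRingGraph G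
  | oneSum {V1 V2 V : Type} {G1 : SimpleGraph V1} {G2 : SimpleGraph V2}
      {G : SimpleGraph V} :
      IsRingGraph G1 → IsRingGraph G2 → IsOneSumDecomp G G1 G2 → IsRingGraph G
  | addIsolated {V W : Type} {G : SimpleGraph V} {H : SimpleGraph W} (f : V ↪ W) :
      IsRingGraph G → (∀ a b, H.Adj a b ↔ ∃ x y, f x = a ∧ f y = b ∧ G.Adj x y) →
      IsRingGraph H

/-- An edge of an induced subgraph is an edge of the ambient graph. -/
lemma induce_edge_mem (G : SimpleGraph V) (s : Set V) (e : Sym2 s)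
    (he : e ∈ (G.induce s).edgeSet) : e.map Subtype.val ∈ G.edgeSet := by
  induction e using Sym2.ind with
  | _ a b =>
    rw [Sym2.map_pair_eq, SimpleGraph.mem_edgeSet]
    exact he

/-- Restriction of a vector indexed by the edges of `G` to the edges of the
subgraph of `G` induced on `s`. -/
noncomputable def restrictCut (G : SimpleGraph V) (s : Set V) (p : G.edgeSet → ℤ) :
    (G.induce s).edgeSet → ℤ :=
  fun e => p ⟨e.1.map Subtype.val, induce_edge_mem G s e.1 e.2⟩


/-!
In a forest every edge `e` is a bridge, so the vertices on one side of `e` form a cut whose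
cut vector is the indicator of `e`; since cut vectors add modulo `2` under symmetric difference
of vertex sets, every set of edges of a forest is a cut. Hence every `(x, r)` with
`0 ≤ x_e ≤ r` is a nonnegative combination of generators `(δ_A, 1)`: subtract the cut of the
support of `x`, scaled by the least positive entry of `x`, and recurse. The coefficients are
integers when `(x, r)` is integral, so `M_T` and `cone(M_T)` are both the cone
`{(x, r) | 0 ≤ x_e ≤ r}` over the unit cube, whose interior is given by the strict inequalities.
-/

open Classical in
@[simp]
lemma cutVec_mk (A : Set V) (v w : V) :
    cutVec A s(v, w) = if (v ∈ A ↔ w ∈ A) then 0 else 1 := by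
  simp [cutVec]

lemma cutVec_eq_zero_or_one (A : Set V) (e : Sym2 V) : cutVec A e = 0 ∨ cutVec A e = 1 := by
  induction e using Sym2.ind with
  | _ v w => simp only [cutVec_mk]; split_ifs <;> simp

lemma cutVec_empty (e : Sym2 V) : cutVec (∅ : Set V) e = 0 := by
  induction e using Sym2.ind with
  | _ v w => simp

lemma cutVec_symmDiff (A B : Set V) (e : Sym2 V) :
    cutVec (symmDiff A B) e = if cutVec A e = cutVec B e then 0 else 1 := by
  induction e using Sym2.ind with
  | _ v w =>
    by_cases v ∈ A <;> by_cases w ∈ A <;> by_cases v ∈ B <;> by_cases w ∈ B <;>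
      simp [*, Set.mem_symmDiff]

namespace SimpleGraph

variable {G : SimpleGraph V}

lemma IsBridge.exists_cutVec_eq_indicator [DecidableEq V] {e : Sym2 V} (he : G.IsBridge e) :
    ∃ A : Set V, ∀ f ∈ G.edgeSet, cutVec A f = if f = e then 1 else 0 := by
  induction e using Sym2.ind with
  | _ v w =>
    refine ⟨{u | (G.deleteEdges {s(v, w)}).Reachable v u}, fun f hf ↦ ?_⟩
    induction f using Sym2.ind with
    | _ a b =>
      split_ifs with hab
      · rw [hab, cutVec_mk, if_neg]
        simpa [isBridge_iff] using he
      · have hab' : (G.deleteEdges {s(v, w)}).Reachable a b :=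
          Adj.reachable (by simpa [hab] using hf)
        rw [cutVec_mk, if_pos]
        exact ⟨fun h ↦ h.trans hab', fun h ↦ h.trans hab'.symm⟩

lemma IsAcyclic.exists_cutVec_eq_indicator [DecidableEq V] (hG : G.IsAcyclic)
    (s : Finset G.edgeSet) : ∃ A : Set V, ∀ e : G.edgeSet, cutVec A e = if e ∈ s then 1 else 0 := by
  induction s using Finset.induction_on with
  | empty => exact ⟨∅, fun e ↦ by simp [cutVec_empty]⟩
  | insert e s he ih =>
    obtain ⟨A, hA⟩ := ih
    obtain ⟨B, hB⟩ := (isAcyclic_iff_forall_isBridge.mp hG e.2).exists_cutVec_eq_indicator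
    refine ⟨symmDiff A B, fun f ↦ ?_⟩
    rw [cutVec_symmDiff, hA f, hB f f.2]
    by_cases hfe : f = e
    · simp [hfe, he]
    · by_cases f ∈ s <;> simp [*, Subtype.val_inj]

end SimpleGraph

section CubeCone

variable (K : Type*) [CommRing K] [LinearOrder K] [IsStrictOrderedRing K]

def cubeCone (ι : Type*) : AddSubmonoid ((ι → K) × K) where
  carrier := {p | 0 ≤ p.2 ∧ ∀ i, 0 ≤ p.1 i ∧ p.1 i ≤ p.2}
  add_mem' := by
    rintro p q ⟨hp, hp'⟩ ⟨hq, hq'⟩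
    exact ⟨add_nonneg hp hq, fun i ↦
      ⟨add_nonneg (hp' i).1 (hq' i).1, add_le_add (hp' i).2 (hq' i).2⟩⟩
  zero_mem' := ⟨le_rfl, fun _ ↦ ⟨le_rfl, le_rfl⟩⟩

/-- Over `ℝ` these are `cutConeGens G`; over `ℤ` they generate `cutMonoid G`. -/
def scaledCutGens (G : SimpleGraph V) : Set ((G.edgeSet → K) × K) :=
  {q | ∃ (c : K) (A : Set V), 0 ≤ c ∧ q = c • ((fun e ↦ (cutVec A e.1 : K)), 1)}

variable {K} {G : SimpleGraph V}

@[simp]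
lemma mem_cubeCone {ι : Type*} {p : (ι → K) × K} :
    p ∈ cubeCone K ι ↔ 0 ≤ p.2 ∧ ∀ i, 0 ≤ p.1 i ∧ p.1 i ≤ p.2 :=
  Iff.rfl

lemma closure_scaledCutGens_le_cubeCone :
    AddSubmonoid.closure (scaledCutGens K G) ≤ cubeCone K G.edgeSet := by
  refine AddSubmonoid.closure_le.2 ?_
  rintro _ ⟨c, A, hc, rfl⟩
  refine ⟨by simpa using hc, fun e ↦ ?_⟩
  rcases cutVec_eq_zero_or_one A e.1 with h | h <;> simp [h, hc]

lemma cubeCone_le_closure_scaledCutGens [Finite G.edgeSet] (hG : G.IsAcyclic) :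
    cubeCone K G.edgeSet ≤ AddSubmonoid.closure (scaledCutGens K G) := by
  classical
  have := Fintype.ofFinite G.edgeSet
  rintro ⟨x, r⟩ ⟨hr, hx⟩
  dsimp only at hr hx
  induction hn : (Finset.univ.filter (0 < x ·)).card using Nat.strong_induction_on
    generalizing x r with
  | _ n ih =>
  by_cases hS : (Finset.univ.filter (0 < x ·)).Nonempty
  swap
  · have hx0 : x = 0 := funext fun e ↦
      le_antisymm (not_lt.1 fun h ↦ hS ⟨e, by simpa using h⟩) (hx e).1
    exact AddSubmonoid.subset_closure ⟨r, ∅, hr, by ext <;> simp [hx0, cutVec_empty]⟩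
  obtain ⟨e₁, he₁, hmin⟩ := Finset.exists_min_image _ x hS
  have hc : 0 < x e₁ := (Finset.mem_filter.1 he₁).2
  obtain ⟨A, hA⟩ := hG.exists_cutVec_eq_indicator (Finset.univ.filter (0 < x ·))
  set δ : G.edgeSet → K := fun e ↦ (cutVec A e : K)
  have hδ : ∀ e, δ e = if 0 < x e then 1 else 0 := fun e ↦ by
    by_cases h : 0 < x e <;> simp [δ, hA, h]
  have hsplit : (x, r) = x e₁ • (δ, (1 : K)) + (x - x e₁ • δ, r - x e₁) := by
    ext <;> simp
  rw [hsplit]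
  refine add_mem (AddSubmonoid.subset_closure ⟨x e₁, A, hc.le, rfl⟩)
    (ih _ ?_ _ _ ?_ ?_ rfl)
  · rw [← hn]
    refine Finset.card_lt_card ((Finset.ssubset_iff_of_subset fun e ↦ ?_).2 ⟨e₁, he₁, ?_⟩)
    · by_cases h : 0 < x e <;> simp [hδ, h]
    · simp [hδ, hc]
  · linarith [(hx e₁).2]
  · intro e
    have hxe := hx e
    have hx₁ := (hx e₁).2
    by_cases h : 0 < x e
    · have hle := hmin e (by simp [h])
      simp only [Pi.sub_apply, Pi.smul_apply, hδ, h, if_true, smul_eq_mul, mul_one]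
      constructor <;> linarith
    · simp only [Pi.sub_apply, Pi.smul_apply, hδ, h, if_false, smul_eq_mul, mul_zero]
      constructor <;> linarith

lemma closure_scaledCutGens_eq_cubeCone [Finite G.edgeSet] (hG : G.IsAcyclic) :
    AddSubmonoid.closure (scaledCutGens K G) = cubeCone K G.edgeSet :=
  le_antisymm closure_scaledCutGens_le_cubeCone (cubeCone_le_closure_scaledCutGens hG)

end CubeCone

variable {G : SimpleGraph V}

lemma closure_scaledCutGens_int_eq_cutMonoid :
    AddSubmonoid.closure (scaledCutGens ℤ G) = cutMonoid G := by
  refine le_antisymm (AddSubmonoid.closure_le.2 ?_) (AddSubmonoid.closure_mono ?_)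
  · rintro _ ⟨c, A, hc, rfl⟩
    lift c to ℕ using hc
    rw [natCast_zsmul]
    exact nsmul_mem (AddSubmonoid.subset_closure (s := cutGens G) ⟨A, by simp⟩) c
  · rintro _ ⟨A, rfl⟩
    use 1, A, zero_le_one
    simp

lemma cutMonoid_eq_cubeCone [Finite G.edgeSet] (hG : G.IsAcyclic) :
    cutMonoid G = cubeCone ℤ G.edgeSet :=
  closure_scaledCutGens_int_eq_cutMonoid.symm.trans (closure_scaledCutGens_eq_cubeCone hG)

lemma cutCone_eq_cubeCone [Finite G.edgeSet] (hG : G.IsAcyclic) :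
    cutCone G = cubeCone ℝ G.edgeSet :=
  congrArg SetLike.coe (closure_scaledCutGens_eq_cubeCone hG)

open Filter Topology in
lemma exists_pos_add_smul_mem_of_mem_interior {E : Type*} [AddCommGroup E] [Module ℝ E]
    [TopologicalSpace E] [ContinuousAdd E] [ContinuousSMul ℝ E] {s : Set E} {p : E}
    (hp : p ∈ interior s) (v : E) : ∃ t : ℝ, 0 < t ∧ p + t • v ∈ s := by
  have hline : Tendsto (fun t : ℝ ↦ p + t • v) (𝓝[>] 0) (𝓝 p) := by
    have : Continuous (fun t : ℝ ↦ p + t • v) := by fun_prop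
    simpa using (this.tendsto 0).mono_left nhdsWithin_le_nhds
  obtain ⟨t, hts, ht⟩ :=
    ((hline.eventually (mem_interior_iff_mem_nhds.1 hp)).and self_mem_nhdsWithin).exists
  exact ⟨t, ht, hts⟩

lemma interior_cubeCone {ι : Type*} [Finite ι] :
    interior (cubeCone ℝ ι : Set ((ι → ℝ) × ℝ)) =
      {p | 0 < p.2 ∧ ∀ i, 0 < p.1 i ∧ p.1 i < p.2} := by
  classical
  refine subset_antisymm (fun p hp ↦ ?_) ?_
  · obtain ⟨t, ht, hpt⟩ := exists_pos_add_smul_mem_of_mem_interior hp (0, -1)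
    have hdown : t ≤ p.2 ∧ ∀ i, 0 ≤ p.1 i ∧ p.1 i + t ≤ p.2 := by simpa using hpt
    refine ⟨by linarith [hdown.1], fun i ↦ ⟨?_, by linarith [(hdown.2 i).2]⟩⟩
    obtain ⟨s, hs, hps⟩ := exists_pos_add_smul_mem_of_mem_interior hp (-Pi.single i 1, 0)
    have hleft : s ≤ p.1 i := by simpa using ((mem_cubeCone.1 hps).2 i).1
    linarith
  · refine interior_maximal
      (fun p hp ↦ ⟨hp.1.le, fun i ↦ ⟨(hp.2 i).1.le, (hp.2 i).2.le⟩⟩) ?_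
    simp only [Set.ofPred_and, Set.ofPred_forall]
    exact (isOpen_lt continuous_const continuous_snd).inter <| isOpen_iInter_of_finite fun i ↦
      (isOpen_lt continuous_const (by fun_prop)).inter (isOpen_lt (by fun_prop) continuous_snd)

theorem tree_interior_description_general {V : Type} [Fintype V] (T : SimpleGraph V)
    (hacyc : T.IsAcyclic) (hedge : T.edgeSet.Nonempty)
    (x : T.edgeSet → ℤ) (a : ℤ) :
    ((x, a) : (T.edgeSet → ℤ) × ℤ) ∈ cutInterior T ↔
      ∀ e, 1 ≤ x e ∧ x e ≤ a - 1 := by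
  obtain ⟨e₀, he₀⟩ := hedge
  simp only [cutInterior, Set.mem_ofPred_eq, cutMonoid_eq_cubeCone hacyc,
    cutCone_eq_cubeCone hacyc, interior_cubeCone, mem_cubeCone, toRealCut, Int.cast_pos,
    Int.cast_lt]
  constructor
  · rintro ⟨-, -, h⟩ e
    have := h e
    omega
  · intro h
    have ha : 2 ≤ a := by linarith [(h ⟨e₀, he₀⟩).1, (h ⟨e₀, he₀⟩).2]
    refine ⟨⟨by omega, fun e ↦ ?_⟩, by omega, fun e ↦ ?_⟩ <;> have := h e <;> omega

/-- For a tree `T` with at least one edge, `(x, α) ∈ int(M_T)` if and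
only if `1 ≤ x_e ≤ α - 1` for every edge `e`. -/
theorem tree_interior_description {V : Type} [Fintype V] (T : SimpleGraph V)
    (hconn : T.Connected) (hacyc : T.IsAcyclic) (hedge : T.edgeSet.Nonempty)
    (x : T.edgeSet → ℤ) (a : ℤ) :
    ((x, a) : (T.edgeSet → ℤ) × ℤ) ∈ cutInterior T ↔
      ∀ e, 1 ≤ x e ∧ x e ≤ a - 1 :=
  tree_interior_description_general T hacyc hedge x a
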